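/- arXiv:1907.11635 — 3 statements merged into one kernel-verified Lean document; each statement's English description precedes it below -/
import Mathlib

section
/- Lower bound on the moments A_d (Lemma locallbd). Let ρ = ρₙ ∈ (0,1], and consider sequences d = dₙ = o(n) and positive integers w = wₙ with wₙ | dₙ and dₙ/wₙ → ∞. Define A_d = (nρ)^{2d} · E⟨v,v'⟩^{2d}, where v, v' are independent draws from the sparse Rademacher prior X_n^ρ. Then for every ε > 0, for all sufficiently large n, A_d ≥ (1−ε) · C(n,d) · ((2d)!·√w / 2^d) · [ 2·(d/(n·e·ρ²))^{1−1/w} · (w/(2w)!)^{1/w} ]^d · ρ^{2d}. -/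
open MeasureTheory Filter

/-- The distribution of a single entry of the sparse Rademacher prior `X_n^ρ`:
`±1/√(ρn)` with probability `ρ/2` each, and `0` with probability `1−ρ`. -/
noncomputable def radEntry (n : ℕ) (ρ : ℝ) : Measure ℝ :=
  ENNReal.ofReal (ρ / 2) • Measure.dirac (1 / Real.sqrt (ρ * n)) +
    ENNReal.ofReal (ρ / 2) • Measure.dirac (-(1 / Real.sqrt (ρ * n))) +
    ENNReal.ofReal (1 - ρ) • Measure.dirac 0

/-- The sparse Rademacher prior `X_n^ρ` on `ℝⁿ` with i.i.d. entries. -/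
noncomputable def radPrior (n : ℕ) (ρ : ℝ) : Measure (Fin n → ℝ) :=
  Measure.pi fun _ => radEntry n ρ

/-- The moment `A_d = (nρ)^{2d} E⟨v,v'⟩^{2d}` for `v, v'` i.i.d. from `X_n^ρ`. -/
noncomputable def Amom (n : ℕ) (ρ : ℝ) (d : ℕ) : ℝ :=
  ((n : ℝ) * ρ) ^ (2 * d) *
    ∫ p, (∑ i, p.1 i * p.2 i) ^ (2 * d) ∂((radPrior n ρ).prod (radPrior n ρ))

open Finset

lemma isProb_radEntry {n : ℕ} {ρ : ℝ} (hρ0 : 0 < ρ) (hρ1 : ρ ≤ 1) :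
    IsProbabilityMeasure (radEntry n ρ) := by
  constructor
  simp only [radEntry, Measure.add_apply, Measure.smul_apply, smul_eq_mul,
    Measure.dirac_apply_of_mem (Set.mem_univ _)]
  simp only [mul_one]
  rw [← ENNReal.ofReal_add (by linarith) (by linarith),
    ← ENNReal.ofReal_add (by linarith) (by linarith)]
  norm_num

lemma integrable_dirac'' {f : ℝ → ℝ} (hf : Measurable f) (x : ℝ) :
    Integrable f (Measure.dirac x) := by
  refine ⟨hf.aestronglyMeasurable, ?_⟩
  rw [HasFiniteIntegral, lintegral_dirac' _ (by fun_prop)]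
  exact ENNReal.coe_lt_top

lemma integrable_pow_radEntry {n : ℕ} {ρ : ℝ} (k : ℕ) :
    Integrable (fun x : ℝ => x ^ k) (radEntry n ρ) := by
  have hm : Measurable (fun x : ℝ => x ^ k) := by fun_prop
  refine Integrable.add_measure (Integrable.add_measure ?_ ?_) ?_ <;>
    exact (integrable_dirac'' hm _).smul_measure ENNReal.ofReal_ne_top

lemma integral_pow_radEntry {n : ℕ} {ρ : ℝ} (hρ0 : 0 < ρ) (hρ1 : ρ ≤ 1) (k : ℕ) :
    ∫ x, x ^ k ∂(radEntry n ρ) =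
      ρ / 2 * (1 / Real.sqrt (ρ * n)) ^ k + ρ / 2 * (-(1 / Real.sqrt (ρ * n))) ^ k
        + (1 - ρ) * (0 : ℝ) ^ k := by
  have hm : Measurable (fun x : ℝ => x ^ k) := by fun_prop
  rw [radEntry, integral_add_measure, integral_add_measure] <;>
    try (first
      | exact (integrable_dirac'' hm _).smul_measure ENNReal.ofReal_ne_top
      | exact ((integrable_dirac'' hm _).smul_measure ENNReal.ofReal_ne_top).add_measure
          ((integrable_dirac'' hm _).smul_measure ENNReal.ofReal_ne_top))
  rw [integral_smul_measure, integral_smul_measure, integral_smul_measure,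
    integral_dirac, integral_dirac, integral_dirac,
    ENNReal.toReal_ofReal (by linarith), ENNReal.toReal_ofReal (by linarith)]
  simp [smul_eq_mul]

lemma choose_factorial_bound (n d m : ℕ) (hmd : m ≤ d) :
    (n.choose d : ℝ) * d.factorial ≤ (n.choose m : ℝ) * m.factorial * (n:ℝ)^(d-m) := by
  obtain ⟨j, rfl⟩ : ∃ j, d = m + j := ⟨d - m, (Nat.add_sub_cancel' hmd).symm⟩
  have hdesc : ∀ k, n.choose k * k.factorial = n.descFactorial k := fun k => by
    rw [Nat.descFactorial_eq_factorial_mul_choose]; ring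
  have hN : n.choose (m+j) * (m+j).factorial ≤ n.choose m * m.factorial * n^j := by
    rw [hdesc, hdesc, Nat.descFactorial_eq_prod_range, Nat.descFactorial_eq_prod_range,
      Finset.prod_range_add]
    refine Nat.mul_le_mul_left _ ?_
    calc ∏ i ∈ range j, (n - (m + i)) ≤ ∏ i ∈ range j, n :=
          Finset.prod_le_prod' (fun i _ => Nat.sub_le _ _)
      _ = n ^ j := by rw [Finset.prod_const, Finset.card_range]
  have : (m + j) - m = j := by omega
  rw [this]
  exact_mod_cast hN

lemma sqrt_pi_le_stirlingSeq (k : ℕ) : Real.sqrt Real.pi ≤ Stirling.stirlingSeq (k+1) := by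
  refine le_of_tendsto Stirling.tendsto_stirlingSeq_sqrt_pi ?_
  filter_upwards [eventually_ge_atTop (k+1)] with j hj
  obtain ⟨i, rfl⟩ : ∃ i, j = i + 1 := ⟨j - 1, by omega⟩
  simpa using Stirling.stirlingSeq'_antitone (show k ≤ i by omega)

lemma stirling_fact_eq (k : ℕ) (hk : 1 ≤ k) :
    (k.factorial : ℝ) = Stirling.stirlingSeq k * (Real.sqrt (2*k) * ((k:ℝ)/Real.exp 1)^k) := by
  have h1 : (0:ℝ) < Real.sqrt (2*k) := Real.sqrt_pos.mpr (by positivity)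
  have h2 : (0:ℝ) < ((k:ℝ)/Real.exp 1)^k := by
    have : (0:ℝ) < (k:ℝ) := by exact_mod_cast hk
    positivity
  rw [Stirling.stirlingSeq]
  field_simp

lemma stirling_ratio (ε : ℝ) (hε : 0 < ε) : ∃ N : ℕ, 1 ≤ N ∧
    ∀ d m w : ℕ, N ≤ m → 1 ≤ w → d = w * m →
    (1 - ε) * (Real.sqrt w * ((w:ℝ)^m *
      (((d:ℝ)/Real.exp 1)^(d-m) * m.factorial))) ≤ d.factorial := by
  rcases le_or_gt 1 ε with hε1 | hε1
  · refine ⟨1, le_refl 1, fun d m w _ _ _ => ?_⟩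
    have h1 : (1 - ε) ≤ 0 := by linarith
    have h2 : (0:ℝ) ≤ Real.sqrt w * ((w:ℝ)^m * (((d:ℝ)/Real.exp 1)^(d-m) * m.factorial)) := by
      positivity
    calc (1-ε) * _ ≤ 0 := mul_nonpos_of_nonpos_of_nonneg h1 h2
      _ ≤ (d.factorial : ℝ) := by positivity
  · have hπ : (0:ℝ) < Real.sqrt Real.pi := Real.sqrt_pos.mpr Real.pi_pos
    have h1ε : (0:ℝ) < 1 - ε := by linarith
    have hgt : Real.sqrt Real.pi < Real.sqrt Real.pi / (1 - ε) := by
      rw [lt_div_iff₀ h1ε]; nlinarith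
    have hev : ∀ᶠ k in atTop, Stirling.stirlingSeq k ≤ Real.sqrt Real.pi / (1 - ε) :=
      Stirling.tendsto_stirlingSeq_sqrt_pi.eventually_le_const hgt
    obtain ⟨N0, hN0⟩ := eventually_atTop.mp hev
    refine ⟨max N0 1, le_max_right _ _, fun d m w hm hw hd => ?_⟩
    have hm1 : 1 ≤ m := le_trans (le_max_right N0 1) hm
    have hmd : m ≤ d := by
      rw [hd]; exact Nat.le_mul_of_pos_left m hw
    have hd1 : 1 ≤ d := le_trans hm1 hmd
    have hsm : Stirling.stirlingSeq m ≤ Real.sqrt Real.pi / (1 - ε) :=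
      hN0 m (le_trans (le_max_left N0 1) hm)
    have hsd : Real.sqrt Real.pi ≤ Stirling.stirlingSeq d := by
      obtain ⟨i, rfl⟩ : ∃ i, d = i + 1 := ⟨d - 1, by omega⟩
      exact sqrt_pi_le_stirlingSeq i
    have e1 : Real.sqrt w * Real.sqrt (2*m) = Real.sqrt (2*d) := by
      rw [← Real.sqrt_mul (by positivity)]
      congr 1
      push_cast [hd]; ring
    have e2 : (w:ℝ)^m * ((m:ℝ)/Real.exp 1)^m = ((d:ℝ)/Real.exp 1)^m := by
      rw [← mul_pow]
      congr 1
      rw [mul_div_assoc']; congr 1; push_cast [hd]; ring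
    have e3 : ((d:ℝ)/Real.exp 1)^(d-m) * ((d:ℝ)/Real.exp 1)^m = ((d:ℝ)/Real.exp 1)^d := by
      rw [← pow_add, Nat.sub_add_cancel hmd]
    rw [stirling_fact_eq m hm1, stirling_fact_eq d hd1]
    have key : (1 - ε) * (Real.sqrt w * ((w:ℝ)^m * (((d:ℝ)/Real.exp 1)^(d-m) *
        (Stirling.stirlingSeq m * (Real.sqrt (2*m) * ((m:ℝ)/Real.exp 1)^m)))))
        = ((1-ε) * Stirling.stirlingSeq m) * (Real.sqrt (2*d) * ((d:ℝ)/Real.exp 1)^d) := by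
      rw [← e1, ← e3, ← e2]; ring
    rw [key]
    have hstep : ((1-ε) * Stirling.stirlingSeq m) ≤ Real.sqrt Real.pi := by
      rw [← le_div_iff₀' h1ε] at *
      exact hsm
    have hpos : (0:ℝ) ≤ Real.sqrt (2*d) * ((d:ℝ)/Real.exp 1)^d := by positivity
    calc ((1-ε) * Stirling.stirlingSeq m) * (Real.sqrt (2*d) * ((d:ℝ)/Real.exp 1)^d)
        ≤ Real.sqrt Real.pi * (Real.sqrt (2*d) * ((d:ℝ)/Real.exp 1)^d) :=
          mul_le_mul_of_nonneg_right hstep hpos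
      _ ≤ Stirling.stirlingSeq d * (Real.sqrt (2*d) * ((d:ℝ)/Real.exp 1)^d) :=
          mul_le_mul_of_nonneg_right hsd hpos

lemma Amom_ge (n d w m : ℕ) (ρ : ℝ) (hρ0 : 0 < ρ) (hρ1 : ρ ≤ 1) (hn : 0 < n)
    (hw : 0 < w) (hm : d = w * m) :
    (n.choose m : ℝ) * ρ ^ (2 * m) * ((2 * d).factorial / ((2 * w).factorial : ℝ) ^ m)
      ≤ Amom n ρ d := by
  have hρn : (0:ℝ) < ρ * n := by positivity
  set b : ℝ := 1 / Real.sqrt (ρ * n) with hbdef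
  have hb2 : b ^ 2 = 1 / (ρ * n) := by
    rw [hbdef, div_pow, one_pow, Real.sq_sqrt hρn.le]
  letI : MeasureSpace ℝ := ⟨radEntry n ρ⟩
  haveI : IsProbabilityMeasure (volume : Measure ℝ) := isProb_radEntry hρ0 hρ1
  have hvol : radPrior n ρ = (volume : Measure (Fin n → ℝ)) := rfl
  -- moments
  have M0 : ∫ x : ℝ, x ^ 0 = 1 := by
    have := integral_pow_radEntry (n := n) hρ0 hρ1 0
    simpa using this
  have Meven : ∫ x : ℝ, x ^ (2 * w) = ρ * b ^ (2 * w) := by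
    have := integral_pow_radEntry (n := n) hρ0 hρ1 (2 * w)
    rw [show ∫ x : ℝ, x ^ (2*w) = ∫ x, x ^ (2*w) ∂(radEntry n ρ) from rfl, this]
    rw [Even.neg_pow (even_two_mul w), zero_pow (by omega)]
    ring
  -- integrability
  have hint : ∀ k : Fin n → ℕ,
      Integrable (fun v : Fin n → ℝ => ∏ i, (v i) ^ (k i)) (volume) := fun k =>
    Integrable.fintype_prod (f := fun i (x : ℝ) => x ^ k i)
      (fun i => integrable_pow_radEntry (k i))
  have hint2 : ∀ k : Fin n → ℕ,
      Integrable (fun p : (Fin n → ℝ) × (Fin n → ℝ) =>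
        (∏ i, (p.1 i) ^ (k i)) * ∏ i, (p.2 i) ^ (k i))
        ((volume : Measure (Fin n → ℝ)).prod volume) := fun k =>
    (hint k).mul_prod (hint k)
  -- expansion
  have expand : ∀ p : (Fin n → ℝ) × (Fin n → ℝ), (∑ i, p.1 i * p.2 i) ^ (2*d)
      = ∑ k ∈ piAntidiag (univ : Finset (Fin n)) (2*d),
          (Nat.multinomial univ k : ℝ) * ((∏ i, (p.1 i) ^ (k i)) * ∏ i, (p.2 i) ^ (k i)) := by
    intro p
    rw [Finset.sum_pow_eq_sum_piAntidiag]
    refine Finset.sum_congr rfl fun k _ => ?_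
    rw [← Finset.prod_mul_distrib]
    simp_rw [mul_pow]
  have hI : ∫ p, (∑ i, p.1 i * p.2 i) ^ (2*d) ∂((radPrior n ρ).prod (radPrior n ρ))
      = ∑ k ∈ piAntidiag (univ : Finset (Fin n)) (2*d),
          (Nat.multinomial univ k : ℝ) * (∏ i, ∫ x : ℝ, x ^ (k i)) ^ 2 := by
    rw [hvol]
    simp_rw [expand]
    rw [integral_finset_sum _ (fun k _ => ((hint2 k).const_mul _))]
    refine Finset.sum_congr rfl fun k _ => ?_
    rw [integral_const_mul,
      integral_prod_mul (f := fun v : Fin n → ℝ => ∏ i, v i ^ k i)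
        (g := fun v : Fin n → ℝ => ∏ i, v i ^ k i), ← hvol, radPrior,
      integral_fintype_prod_eq_prod (f := fun (i : Fin n) (x : ℝ) => x ^ k i), sq]
    rfl
  classical
  set T : Finset (Fin n → ℕ) :=
    (powersetCard m (univ : Finset (Fin n))).image
      (fun S i => if i ∈ S then 2*w else 0) with hT
  have hsub : T ⊆ piAntidiag (univ : Finset (Fin n)) (2*d) := by
    intro k hk
    simp only [hT, mem_image] at hk
    obtain ⟨S, hS, rfl⟩ := hk
    rw [mem_piAntidiag]
    refine ⟨?_, fun i _ => mem_univ i⟩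
    rw [Finset.sum_ite_mem, Finset.univ_inter, Finset.sum_const,
      (Finset.mem_powersetCard.mp hS).2, smul_eq_mul, hm]
    ring
  have hterm : ∀ S ∈ powersetCard m (univ : Finset (Fin n)),
      (Nat.multinomial univ (fun i => if i ∈ S then 2*w else 0) : ℝ) *
        (∏ i, ∫ x : ℝ, x ^ (if i ∈ S then 2*w else 0)) ^ 2
      = ((2*d).factorial / ((2*w).factorial : ℝ)^m) * (ρ^(2*m) * (b^2)^(2*d)) := by
    intro S hS
    have hcard : S.card = m := (Finset.mem_powersetCard.mp hS).2
    have hmult : (((2*w).factorial : ℕ))^m *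
        Nat.multinomial univ (fun i => if i ∈ S then 2*w else 0) = (2*d).factorial := by
      have hspec := Nat.multinomial_spec (univ : Finset (Fin n))
        (fun i => if i ∈ S then 2*w else 0)
      have h1 : ∏ i, (if i ∈ S then 2*w else 0).factorial = ((2*w).factorial)^m := by
        simp_rw [apply_ite Nat.factorial, Nat.factorial_zero]
        rw [Finset.prod_ite_mem, Finset.univ_inter, Finset.prod_const, hcard]
      have h2 : ∑ i, (if i ∈ S then 2*w else 0) = 2*d := by
        rw [Finset.sum_ite_mem, Finset.univ_inter, Finset.sum_const, hcard, smul_eq_mul, hm]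
        ring
      rw [h1, h2] at hspec
      exact hspec
    have hmultR : (Nat.multinomial univ (fun i => if i ∈ S then 2*w else 0) : ℝ)
        = (2*d).factorial / ((2*w).factorial : ℝ)^m := by
      rw [eq_div_iff (by positivity)]
      rw [mul_comm]
      exact_mod_cast congrArg (Nat.cast : ℕ → ℝ) hmult
    have hprod : (∏ i, ∫ x : ℝ, x ^ (if i ∈ S then 2*w else 0))
        = (ρ * b^(2*w))^m := by
      have : ∀ i : Fin n, (∫ x : ℝ, x ^ (if i ∈ S then 2*w else 0))
          = (if i ∈ S then ρ * b^(2*w) else 1) := by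
        intro i
        by_cases h : i ∈ S <;> simp [h, Meven, M0]
      simp_rw [this]
      rw [Finset.prod_ite_mem, Finset.univ_inter, Finset.prod_const, hcard]
    rw [hmultR, hprod]
    have : ((ρ * b^(2*w))^m)^2 = ρ^(2*m) * (b^2)^(2*d) := by
      rw [hm]; ring
    rw [this]
  have hbig : ∑ k ∈ T, (Nat.multinomial univ k : ℝ) * (∏ i, ∫ x : ℝ, x ^ (k i)) ^ 2
      = (n.choose m : ℝ) *
        (((2*d).factorial / ((2*w).factorial : ℝ)^m) * (ρ^(2*m) * (b^2)^(2*d))) := by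
    rw [hT, Finset.sum_image]
    · rw [Finset.sum_congr rfl hterm, Finset.sum_const,
        Finset.card_powersetCard, Finset.card_univ, Fintype.card_fin, nsmul_eq_mul]
    · intro S hS S' hS' hEq
      ext i
      have := congrFun hEq i
      by_cases h : i ∈ S <;> by_cases h' : i ∈ S' <;> simp [h, h'] at this ⊢ <;> omega
  have hnonneg : ∀ k ∈ piAntidiag (univ : Finset (Fin n)) (2*d), k ∉ T →
      0 ≤ (Nat.multinomial univ k : ℝ) * (∏ i, ∫ x : ℝ, x ^ (k i)) ^ 2 := by
    intro k _ _; positivity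
  have hsum_ge := Finset.sum_le_sum_of_subset_of_nonneg hsub hnonneg
  have hcancel : ((n:ℝ) * ρ)^(2*d) * (b^2)^(2*d) = 1 := by
    rw [hb2, ← mul_pow, mul_one_div, mul_comm (n:ℝ) ρ, div_self hρn.ne', one_pow]
  have hfinal : ((n:ℝ) * ρ)^(2*d) * ((n.choose m : ℝ) *
        (((2*d).factorial / ((2*w).factorial : ℝ)^m) * (ρ^(2*m) * (b^2)^(2*d))))
      = (n.choose m : ℝ) * ρ ^ (2*m) * ((2*d).factorial / ((2*w).factorial : ℝ)^m) := by
    calc ((n:ℝ) * ρ)^(2*d) * ((n.choose m : ℝ) *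
          (((2*d).factorial / ((2*w).factorial : ℝ)^m) * (ρ^(2*m) * (b^2)^(2*d))))
        = (((n:ℝ) * ρ)^(2*d) * (b^2)^(2*d)) * ((n.choose m : ℝ) *
          (((2*d).factorial / ((2*w).factorial : ℝ)^m) * ρ^(2*m))) := by ring
      _ = (n.choose m : ℝ) * ρ ^ (2*m) * ((2*d).factorial / ((2*w).factorial : ℝ)^m) := by
          rw [hcancel]; ring
  rw [Amom, hI, ← hfinal]
  exact mul_le_mul_of_nonneg_left (hbig ▸ hsum_ge) (by positivity)

/-- **Lower bound on the moments `A_d`** (Lemma locallbd).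
Let `ρ = ρₙ ∈ (0,1]`, `d = dₙ = o(n)` and `w = wₙ` positive integers with `wₙ ∣ dₙ`
and `dₙ/wₙ → ∞`. Then for every `ε > 0`, for all sufficiently large `n`,
`A_d ≥ (1−ε)·C(n,d)·((2d)!·√w/2^d)·[2·(d/(n·e·ρ²))^{1−1/w}·(w/(2w)!)^{1/w}]^d·ρ^{2d}`. -/
theorem Amom_lower_bound (ρ : ℕ → ℝ) (d w : ℕ → ℕ)
    (hρ : ∀ n, ρ n ∈ Set.Ioc (0 : ℝ) 1)
    (hd : Tendsto (fun n => (d n : ℝ) / n) atTop (nhds 0))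
    (hw : ∀ n, 0 < w n) (hdvd : ∀ n, w n ∣ d n)
    (hratio : Tendsto (fun n => (d n : ℝ) / w n) atTop atTop) :
    ∀ ε : ℝ, 0 < ε →
      ∀ᶠ n in atTop,
        (1 - ε) * (n.choose (d n) : ℝ) *
            ((Nat.factorial (2 * d n) : ℝ) * Real.sqrt (w n) / 2 ^ (d n)) *
            (2 * ((d n : ℝ) / ((n : ℝ) * Real.exp 1 * ρ n ^ 2)) ^ (1 - 1 / (w n : ℝ)) *
                ((w n : ℝ) / Nat.factorial (2 * w n)) ^ (1 / (w n : ℝ))) ^ (d n) *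
            ρ n ^ (2 * d n) ≤
          Amom n (ρ n) (d n) := by
  intro ε hε
  obtain ⟨N, hN1, hstir⟩ := stirling_ratio ε hε
  filter_upwards [hratio.eventually_ge_atTop (N:ℝ), eventually_ge_atTop 1] with n hrn hn1
  set D := d n with hD
  set W := w n with hW
  set M := D / W with hMdef
  have hW1 : 1 ≤ W := hw n
  have hdm : D = W * M := (Nat.mul_div_cancel' (hdvd n)).symm
  have hWR : ((W:ℝ)) ≠ 0 := by positivity
  have hMR : (M : ℝ) = (D:ℝ) / (W:ℝ) := by
    rw [eq_div_iff hWR]; exact_mod_cast (mul_comm W M ▸ hdm).symm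
  have hM : N ≤ M := by
    have : (N:ℝ) ≤ (M:ℝ) := by rw [hMR]; exact hrn
    exact_mod_cast this
  have hM1 : 1 ≤ M := le_trans hN1 hM
  have hmd : M ≤ D := hdm ▸ Nat.le_mul_of_pos_left M hW1
  have hD1 : 1 ≤ D := le_trans hM1 hmd
  set j := D - M with hjdef
  have hDj : D = M + j := by omega
  set r := ρ n with hr
  obtain ⟨hr0, hr1⟩ := hρ n
  have hnR : (0:ℝ) < (n:ℝ) := by exact_mod_cast hn1
  have hE : (0:ℝ) < Real.exp 1 := Real.exp_pos 1
  -- rpow to npow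
  set X : ℝ := (D : ℝ) / ((n : ℝ) * Real.exp 1 * r ^ 2) with hXdef
  set Y : ℝ := (W : ℝ) / ((2 * W).factorial : ℝ) with hYdef
  have hX0 : (0:ℝ) ≤ X := by positivity
  have hY0 : (0:ℝ) ≤ Y := by positivity
  have hXp : (X ^ ((1:ℝ) - 1/(W:ℝ))) ^ D = X ^ j := by
    rw [← Real.rpow_natCast (X ^ ((1:ℝ) - 1/(W:ℝ))) D, ← Real.rpow_mul hX0]
    have : ((1:ℝ) - 1/(W:ℝ)) * (D:ℕ) = (j:ℕ) := by
      have hj : (j:ℝ) = (D:ℝ) - (M:ℝ) := by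
        push_cast [hjdef, Nat.cast_sub hmd]; ring
      rw [hj, hMR]; field_simp
    rw [this, Real.rpow_natCast]
  have hYp : (Y ^ ((1:ℝ)/(W:ℝ))) ^ D = Y ^ M := by
    rw [← Real.rpow_natCast (Y ^ ((1:ℝ)/(W:ℝ))) D, ← Real.rpow_mul hY0]
    have : ((1:ℝ)/(W:ℝ)) * (D:ℕ) = (M:ℕ) := by
      rw [hMR]; field_simp
    rw [this, Real.rpow_natCast]
  -- main comparison
  have S1 := hstir D M W hM hW1 hdm
  have S2 := choose_factorial_bound n D M hmd
  have hDfpos : (0:ℝ) < D.factorial := by exact_mod_cast D.factorial_pos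
  have hMfpos : (0:ℝ) < M.factorial := by exact_mod_cast M.factorial_pos
  have hnjpos : (0:ℝ) < (n:ℝ)^j := by positivity
  have hA : (1-ε) * (n.choose D : ℝ) * Real.sqrt W * (W:ℝ)^M * ((D:ℝ)/Real.exp 1)^j / (n:ℝ)^j
      ≤ (n.choose M : ℝ) := by
    rw [div_le_iff₀ hnjpos]
    have mul1 : ((1 - ε) * (Real.sqrt W * ((W:ℝ)^M * (((D:ℝ)/Real.exp 1)^(D-M) * M.factorial))))
        * ((n.choose D : ℝ) * D.factorial)
        ≤ (D.factorial : ℝ) * ((n.choose M : ℝ) * M.factorial * (n:ℝ)^(D-M)) :=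
      mul_le_mul S1 S2 (by positivity) (by positivity)
    rw [show D - M = j from rfl] at mul1
    have := le_of_mul_le_mul_right
      (by calc (1-ε) * (n.choose D : ℝ) * Real.sqrt W * (W:ℝ)^M * ((D:ℝ)/Real.exp 1)^j
              * (D.factorial * M.factorial)
            = ((1 - ε) * (Real.sqrt W * ((W:ℝ)^M * (((D:ℝ)/Real.exp 1)^j * M.factorial))))
              * ((n.choose D : ℝ) * D.factorial) := by ring
          _ ≤ (D.factorial : ℝ) * ((n.choose M : ℝ) * M.factorial * (n:ℝ)^j) := mul1
          _ = (n.choose M : ℝ) * (n:ℝ)^j * (D.factorial * M.factorial) := by ring)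
      (by positivity : (0:ℝ) < D.factorial * M.factorial)
    linarith
  set K : ℝ := ((2*D).factorial : ℝ) * r^(2*M) / (((2*W).factorial : ℝ))^M with hKdef
  have hK0 : (0:ℝ) ≤ K := by positivity
  have hTeq : (1 - ε) * (n.choose D : ℝ) * (((2*D).factorial : ℝ) * Real.sqrt W / 2 ^ D) *
      (2 * X ^ ((1:ℝ) - 1/(W:ℝ)) * Y ^ ((1:ℝ)/(W:ℝ))) ^ D * r ^ (2*D)
      = ((1-ε) * (n.choose D : ℝ) * Real.sqrt W * (W:ℝ)^M * ((D:ℝ)/Real.exp 1)^j / (n:ℝ)^j)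
        * K := by
    rw [mul_pow, mul_pow, hXp, hYp, hXdef, hYdef, hKdef]
    have hrD : r ^ (2*D) = r^(2*M) * (r^2)^j := by rw [hDj]; ring
    rw [hrD]
    have h2W : (0:ℝ) < ((2*W).factorial : ℝ) := by exact_mod_cast (2*W).factorial_pos
    have h2D : (0:ℝ) < (2:ℝ)^D := by positivity
    have hr2 : (0:ℝ) < r^2 := by positivity
    have hexp : Real.exp (j:ℝ) = Real.exp 1 ^ j := by
      rw [← Real.exp_nat_mul, mul_one]
    field_simp
    have hrne : r ≠ 0 := ne_of_gt hr0
    simp only [div_pow, mul_pow]; field_simp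
  rw [hTeq]
  calc ((1-ε) * (n.choose D : ℝ) * Real.sqrt W * (W:ℝ)^M * ((D:ℝ)/Real.exp 1)^j / (n:ℝ)^j) * K
      ≤ (n.choose M : ℝ) * K := mul_le_mul_of_nonneg_right hA hK0
    _ = (n.choose M : ℝ) * r ^ (2*M) * (((2*D).factorial : ℝ) / (((2*W).factorial : ℝ))^M) := by
        rw [hKdef]; ring
    _ ≤ Amom n r D := Amom_ge n D W M r hr0 hr1 (by omega) hW1 hdm
end

section
/- Bounds on the coefficient in the Wishart low-degree likelihood ratio (Lemma coef). Let Dₙ = o(N) (N = Nₙ → ∞). There exist absolute constants c₁, c₂ > 0 such that, for all sufficiently large N and all 1 ≤ d ≤ Dₙ: (2N)^d / d! ≤ ∑_{d₁,…,d_N ≥ 0, ∑ᵢ dᵢ = d} ∏_{i=1}^{N} C(2dᵢ, dᵢ) ≤ c₁ · d^{3/2} · e^{c₂ d²/N} · (2N)^d / d!. -/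
/-!
Writing `x = N / 2`, the coefficient has the closed form
`d! · wishartCoef N d = 4^d · x(x+1)⋯(x+d-1)`: since `k! · C(2k,k) = 4^k · (1/2)(3/2)⋯(k-1/2)`,
this is the Chu–Vandermonde identity for rising factorials, `(a + b)^(d) = ∑ C(d,i) a^(i) b^(d-i)`,
iterated over the `N` coordinates. Both bounds then come from
`x^d ≤ x(x+1)⋯(x+d-1) ≤ x^d · exp(d² / 2x)`, using `x + j ≤ x · exp(j / x)`.
-/

open Filter

/-- The coefficient `∑_{d₁+⋯+d_N = d} ∏ᵢ C(2dᵢ, dᵢ)` appearing in the Wishart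
low-degree likelihood ratio. -/
def wishartCoef (N d : ℕ) : ℕ :=
  ∑ t ∈ Finset.Nat.antidiagonalTuple N d, ∏ i, Nat.choose (2 * t i) (t i)

open Finset Polynomial Nat

theorem ascPochhammer_eval_add {R : Type*} [CommSemiring R] (r s : R) (k : ℕ) :
    (ascPochhammer R k).eval (r + s) = ∑ ij ∈ antidiagonal k,
      k.choose ij.1 * ((ascPochhammer R ij.1).eval r * (ascPochhammer R ij.2).eval s) := by
  induction k with
  | zero => simp
  | succ k ih =>
    rw [sum_antidiagonal_choose_succ_mul
        fun i j => (ascPochhammer R i).eval r * (ascPochhammer R j).eval s,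
      ← sum_add_distrib, ascPochhammer_succ_eval, ih, sum_mul]
    refine sum_congr rfl fun ij hij => ?_
    obtain rfl : ij.1 + ij.2 = k := mem_antidiagonal.mp hij
    rw [Nat.choose_symm_add, ascPochhammer_succ_eval, ascPochhammer_succ_eval]
    push_cast
    ring

theorem factorial_mul_centralBinom_eq {K : Type*} [Field K] [CharZero K] (k : ℕ) :
    (k ! * k.centralBinom : K) = 4 ^ k * (ascPochhammer K k).eval (1 / 2) := by
  induction k with
  | zero => simp
  | succ k ih =>
    have h := congrArg (Nat.cast : ℕ → K) (Nat.succ_mul_centralBinom_succ k)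
    push_cast at h
    rw [Nat.factorial_succ, ascPochhammer_succ_eval]
    push_cast
    linear_combination (k ! : K) * h + 2 * (2 * k + 1 : K) * ih

theorem pow_le_ascPochhammer_eval {S : Type*} [CommSemiring S] [PartialOrder S]
    [IsOrderedRing S] {x : S} (hx : 0 ≤ x) (d : ℕ) : x ^ d ≤ (ascPochhammer S d).eval x := by
  induction d with
  | zero => simp
  | succ d ih =>
    rw [pow_succ, ascPochhammer_succ_eval]
    exact mul_le_mul ih (le_add_of_nonneg_right d.cast_nonneg) hx ((pow_nonneg hx d).trans ih)

/-- At `x = 0` the exponent is the junk value `d² / 0 = 0`; the bound still holds there, both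
sides vanishing for `d ≥ 1`. -/
theorem ascPochhammer_eval_le_pow_mul_exp {x : ℝ} (hx : 0 ≤ x) (d : ℕ) :
    (ascPochhammer ℝ d).eval x ≤ x ^ d * Real.exp (d ^ 2 / (2 * x)) := by
  rcases hx.eq_or_lt with rfl | hx
  · rw [ascPochhammer_eval_zero]
    split_ifs with hd <;> simp [hd]
  induction d with
  | zero => simp
  | succ d ih =>
    have hstep : x + d ≤ x * Real.exp (d / x) := by
      have := mul_le_mul_of_nonneg_left (Real.add_one_le_exp (d / x)) hx.le
      rwa [mul_add, mul_div_cancel₀ _ hx.ne', mul_one, add_comm] at this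
    have hexp : (d : ℝ) ^ 2 / (2 * x) + d / x ≤ ((d + 1 : ℕ) : ℝ) ^ 2 / (2 * x) := by
      rw [div_add_div _ _ (by positivity) hx.ne', div_le_div_iff₀ (by positivity) (by positivity)]
      push_cast
      nlinarith [sq_nonneg x]
    calc (ascPochhammer ℝ (d + 1)).eval x = (ascPochhammer ℝ d).eval x * (x + d) :=
          ascPochhammer_succ_eval d x
      _ ≤ x ^ d * Real.exp (d ^ 2 / (2 * x)) * (x * Real.exp (d / x)) := by
          gcongr
      _ = x ^ (d + 1) * Real.exp (d ^ 2 / (2 * x) + d / x) := by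
          rw [Real.exp_add, pow_succ]; ring
      _ ≤ x ^ (d + 1) * Real.exp (((d + 1 : ℕ) : ℝ) ^ 2 / (2 * x)) := by gcongr

theorem Finset.Nat.sum_antidiagonalTuple_succ {M : Type*} [AddCommMonoid M] (k n : ℕ)
    (f : (Fin (k + 1) → ℕ) → M) :
    ∑ t ∈ antidiagonalTuple (k + 1) n, f t =
      ∑ ij ∈ antidiagonal n, ∑ t ∈ antidiagonalTuple k ij.2, f (Fin.cons ij.1 t) := by
  rw [sum_sigma']
  refine sum_nbij' (fun t => ⟨(t 0, n - t 0), Fin.tail t⟩) (fun p => Fin.cons p.1.1 p.2)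
    ?_ ?_ ?_ ?_ ?_
  · intro t ht
    rw [mem_antidiagonalTuple, Fin.sum_univ_succ] at ht
    simp only [mem_sigma, HasAntidiagonal.mem_antidiagonal, mem_antidiagonalTuple, Fin.tail]
    omega
  · rintro ⟨⟨i, j⟩, t⟩ hp
    rw [mem_sigma, HasAntidiagonal.mem_antidiagonal, mem_antidiagonalTuple] at hp
    simp [mem_antidiagonalTuple, Fin.sum_cons, hp.1, hp.2]
  · intro t _
    simp
  · rintro ⟨⟨i, j⟩, t⟩ hp
    rw [mem_sigma, HasAntidiagonal.mem_antidiagonal] at hp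
    simp [← hp.1]
  · intro t _
    simp

theorem wishartCoef_zero_left (d : ℕ) : wishartCoef 0 d = if d = 0 then 1 else 0 := by
  cases d <;> simp [wishartCoef, antidiagonalTuple_zero_succ]

theorem wishartCoef_succ_left (N d : ℕ) :
    wishartCoef (N + 1) d =
      ∑ ij ∈ antidiagonal d, ij.1.centralBinom * wishartCoef N ij.2 := by
  simp [wishartCoef, sum_antidiagonalTuple_succ, Fin.prod_univ_succ, mul_sum,
    centralBinom_eq_two_mul_choose]

theorem factorial_mul_wishartCoef {K : Type*} [Field K] [CharZero K] (N d : ℕ) :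
    (d ! * wishartCoef N d : K) = 4 ^ d * (ascPochhammer K d).eval ((N : K) / 2) := by
  induction N generalizing d with
  | zero => rw [wishartCoef_zero_left]; split_ifs <;> simp [*]
  | succ N ih =>
    rw [wishartCoef_succ_left, Nat.cast_sum, mul_sum, Nat.cast_succ, add_div, add_comm,
      ascPochhammer_eval_add, mul_sum]
    refine sum_congr rfl fun ⟨i, j⟩ hij => ?_
    obtain rfl : i + j = d := mem_antidiagonal.mp hij
    rw [← add_choose_mul_factorial_mul_factorial, ← Nat.choose_symm_add, pow_add]
    push_cast
    linear_combination ((i + j).choose i * i ! * i.centralBinom : K) * ih j +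
      ((i + j).choose i * 4 ^ j * (ascPochhammer K j).eval (N / 2 : K)) *
        factorial_mul_centralBinom_eq (K := K) i

theorem wishart_coef_bounds_general (N D : ℕ → ℕ) :
    ∃ c₁ c₂ : ℝ, 0 < c₁ ∧ 0 < c₂ ∧
      ∀ᶠ n in atTop, ∀ d : ℕ, 1 ≤ d → d ≤ D n →
        (2 * (N n : ℝ)) ^ d / Nat.factorial d ≤ (wishartCoef (N n) d : ℝ) ∧
        (wishartCoef (N n) d : ℝ) ≤
          c₁ * (d : ℝ) ^ ((3 : ℝ) / 2) * Real.exp (c₂ * (d : ℝ) ^ 2 / N n) *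
            (2 * (N n : ℝ)) ^ d / Nat.factorial d := by
  refine ⟨1, 1, one_pos, one_pos, Eventually.of_forall fun n d hd _ => ?_⟩
  set x : ℝ := (N n : ℝ) / 2
  have hx : 0 ≤ x := by positivity
  have hcoef : (wishartCoef (N n) d : ℝ) = 4 ^ d * (ascPochhammer ℝ d).eval x / d ! := by
    rw [← factorial_mul_wishartCoef]
    field_simp
  have hpow : (2 * (N n : ℝ)) ^ d = 4 ^ d * x ^ d := by
    rw [← mul_pow]
    ring
  have hexp : 1 * (d : ℝ) ^ 2 / N n = d ^ 2 / (2 * x) := by ring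
  have hd32 : 1 ≤ (d : ℝ) ^ ((3 : ℝ) / 2) := Real.one_le_rpow (by exact_mod_cast hd) (by norm_num)
  rw [hcoef, hpow, hexp]
  constructor
  · gcongr
    exact pow_le_ascPochhammer_eval hx d
  · calc 4 ^ d * (ascPochhammer ℝ d).eval x / d !
        ≤ 4 ^ d * (x ^ d * Real.exp (d ^ 2 / (2 * x))) / d ! := by
          gcongr
          exact ascPochhammer_eval_le_pow_mul_exp hx d
      _ ≤ (d : ℝ) ^ ((3 : ℝ) / 2) * (4 ^ d * (x ^ d * Real.exp (d ^ 2 / (2 * x))) / d !) :=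
          le_mul_of_one_le_left (by positivity) hd32
      _ = _ := by ring

/-- **Bounds on the coefficient in the Wishart LDLR** (Lemma coef).
If `Dₙ = o(N)` with `N = Nₙ → ∞`, then there exist absolute constants `c₁, c₂ > 0`
such that for all sufficiently large `N` (i.e. all sufficiently large `n`) and all
`1 ≤ d ≤ Dₙ`,
`(2N)^d/d! ≤ ∑_{∑dᵢ=d} ∏ C(2dᵢ,dᵢ) ≤ c₁ d^{3/2} e^{c₂ d²/N} (2N)^d/d!`. -/
theorem wishart_coef_bounds (N D : ℕ → ℕ)
    (hN : Tendsto (fun n => N n) atTop atTop)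
    (hD : Tendsto (fun n => (D n : ℝ) / N n) atTop (nhds 0)) :
    ∃ c₁ c₂ : ℝ, 0 < c₁ ∧ 0 < c₂ ∧
      ∀ᶠ n in atTop, ∀ d : ℕ, 1 ≤ d → d ≤ D n →
        (2 * (N n : ℝ)) ^ d / Nat.factorial d ≤ (wishartCoef (N n) d : ℝ) ∧
        (wishartCoef (N n) d : ℝ) ≤
          c₁ * (d : ℝ) ^ ((3 : ℝ) / 2) * Real.exp (c₂ * (d : ℝ) ^ 2 / N n) *
            (2 * (N n : ℝ)) ^ d / Nat.factorial d :=
  wishart_coef_bounds_general N D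
end

section
/- Maximization of even multinomial coefficients over balanced partitions (the inequality binom-estim). Let d, k be positive integers with k ≤ d, and write d = wk + r with integers w ≥ 1 and 0 ≤ r < k. Then for all positive integers b₁,…,b_k with ∑ᵢ bᵢ = d, the multinomial coefficient (2d)!/((2b₁)!⋯(2b_k)!) is at most M(k) := (2d)!/((2w)!^{k−r}·(2(w+1))!^{r}), with equality if and only if the multiset {b₁,…,b_k} consists of r copies of w+1 and k−r copies of w. -/
/-!
`φ n = log (2n)!` has strictly increasing increments `log ((2n+1)(2n+2))`, so it lies above
each of its discrete tangent lines `φ w + (x - w) (φ (w+1) - φ w)` and touches it only at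
`x = w` and `x = w + 1`. Summing this over the `bᵢ` and using `∑ bᵢ = wk + r` gives
`∑ φ bᵢ ≥ (k - r) φ w + r φ (w+1)`, with equality iff every `bᵢ ∈ {w, w+1}`; the sum
constraint then forces exactly `r` of them to be `w + 1`.
-/

open Finset Nat

def StrictConvexSeq (f : ℕ → ℝ) : Prop :=
  StrictMono fun n => f (n + 1) - f n

theorem Real.log_pow_mul_pow {a b : ℝ} (ha : 0 < a) (hb : 0 < b) (m n : ℕ) :
    Real.log (a ^ m * b ^ n) = m * Real.log a + n * Real.log b := by
  rw [Real.log_mul (pow_pos ha m).ne' (pow_pos hb n).ne', Real.log_pow, Real.log_pow]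

theorem sum_tangent_eq {f : ℕ → ℝ} {ι : Type*} (s : Finset ι) (b : ι → ℕ) {w r : ℕ}
    (hr : r ≤ #s) (hsum : ∑ i ∈ s, b i = w * #s + r) :
    ∑ i ∈ s, (f w + ((b i : ℝ) - w) * (f (w + 1) - f w)) =
      ((#s - r : ℕ) : ℝ) * f w + r * f (w + 1) := by
  have hsumℝ : ∑ i ∈ s, (b i : ℝ) = w * #s + r := by exact_mod_cast hsum
  rw [sum_add_distrib, ← sum_mul, sum_sub_distrib, hsumℝ, sum_const, sum_const, nsmul_eq_mul,
    nsmul_eq_mul, Nat.cast_sub hr]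
  ring

namespace StrictConvexSeq

variable {f : ℕ → ℝ}

theorem sub_lt_mul_of_lt (hf : StrictConvexSeq f) {x w : ℕ} (hxw : x < w) :
    f w - f x < ((w : ℝ) - x) * (f (w + 1) - f w) := calc
  f w - f x = ∑ j ∈ Ico x w, (f (j + 1) - f j) := (sum_Ico_sub f hxw.le).symm
  _ < ∑ _j ∈ Ico x w, (f (w + 1) - f w) :=
    sum_lt_sum_of_nonempty (nonempty_Ico.2 hxw) fun j hj => hf (mem_Ico.1 hj).2
  _ = ((w : ℝ) - x) * (f (w + 1) - f w) := by
    rw [sum_const, card_Ico, nsmul_eq_mul, Nat.cast_sub hxw.le]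

theorem mul_lt_sub_of_lt (hf : StrictConvexSeq f) {w x : ℕ} (hwx : w + 1 < x) :
    ((x : ℝ) - (w + 1)) * (f (w + 1) - f w) < f x - f (w + 1) := calc
  ((x : ℝ) - (w + 1)) * (f (w + 1) - f w) = ∑ _j ∈ Ico (w + 1) x, (f (w + 1) - f w) := by
    rw [sum_const, card_Ico, nsmul_eq_mul, Nat.cast_sub hwx.le, Nat.cast_succ]
  _ < ∑ j ∈ Ico (w + 1) x, (f (j + 1) - f j) :=
    sum_lt_sum_of_nonempty (nonempty_Ico.2 hwx) fun j hj => hf (mem_Ico.1 hj).1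
  _ = f x - f (w + 1) := sum_Ico_sub f hwx.le

theorem tangent_lt (hf : StrictConvexSeq f) {w x : ℕ} (hw : x ≠ w) (hw' : x ≠ w + 1) :
    f w + ((x : ℝ) - w) * (f (w + 1) - f w) < f x := by
  rcases lt_or_gt_of_ne hw with hxw | hwx
  · linarith [hf.sub_lt_mul_of_lt hxw]
  · linarith [hf.mul_lt_sub_of_lt (show w + 1 < x by omega)]

theorem tangent_le (hf : StrictConvexSeq f) (w x : ℕ) :
    f w + ((x : ℝ) - w) * (f (w + 1) - f w) ≤ f x := by
  by_cases hw : x = w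
  · simp [hw]
  by_cases hw' : x = w + 1
  · simp [hw']
  exact (hf.tangent_lt hw hw').le

theorem tangent_eq_iff (hf : StrictConvexSeq f) (w x : ℕ) :
    f w + ((x : ℝ) - w) * (f (w + 1) - f w) = f x ↔ x = w ∨ x = w + 1 := by
  refine ⟨fun h => ?_, ?_⟩
  · by_contra! hne
    exact (hf.tangent_lt hne.1 hne.2).ne h
  · rintro (rfl | rfl) <;> simp

theorem balanced_le_sum (hf : StrictConvexSeq f) {ι : Type*} (s : Finset ι) (b : ι → ℕ)
    {w r : ℕ} (hr : r ≤ #s) (hsum : ∑ i ∈ s, b i = w * #s + r) :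
    ((#s - r : ℕ) : ℝ) * f w + r * f (w + 1) ≤ ∑ i ∈ s, f (b i) :=
  sum_tangent_eq s b hr hsum ▸ sum_le_sum fun i _ => hf.tangent_le w (b i)

theorem sum_eq_balanced_iff (hf : StrictConvexSeq f) {ι : Type*} (s : Finset ι) (b : ι → ℕ)
    {w r : ℕ} (hr : r ≤ #s) (hsum : ∑ i ∈ s, b i = w * #s + r) :
    ∑ i ∈ s, f (b i) = ((#s - r : ℕ) : ℝ) * f w + r * f (w + 1) ↔
      ∀ i ∈ s, b i = w ∨ b i = w + 1 := by
  rw [eq_comm, ← sum_tangent_eq s b hr hsum,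
    sum_eq_sum_iff_of_le fun i _ => hf.tangent_le w (b i)]
  exact forall₂_congr fun i _ => hf.tangent_eq_iff w (b i)

theorem pow_mul_pow_le_prod (hf : StrictConvexSeq fun n => Real.log (f n))
    (hpos : ∀ n, 0 < f n) {ι : Type*} (s : Finset ι) (b : ι → ℕ) {w r : ℕ}
    (hr : r ≤ #s) (hsum : ∑ i ∈ s, b i = w * #s + r) :
    f w ^ (#s - r) * f (w + 1) ^ r ≤ ∏ i ∈ s, f (b i) := by
  rw [← Real.log_le_log_iff (mul_pos (pow_pos (hpos w) _) (pow_pos (hpos (w + 1)) r))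
      (prod_pos fun i _ => hpos (b i)),
    Real.log_pow_mul_pow (hpos w) (hpos (w + 1)), Real.log_prod fun i _ => (hpos (b i)).ne']
  exact hf.balanced_le_sum s b hr hsum

theorem prod_eq_pow_mul_pow_iff (hf : StrictConvexSeq fun n => Real.log (f n))
    (hpos : ∀ n, 0 < f n) {ι : Type*} (s : Finset ι) (b : ι → ℕ) {w r : ℕ}
    (hr : r ≤ #s) (hsum : ∑ i ∈ s, b i = w * #s + r) :
    ∏ i ∈ s, f (b i) = f w ^ (#s - r) * f (w + 1) ^ r ↔
      ∀ i ∈ s, b i = w ∨ b i = w + 1 := by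
  rw [← Real.log_injOn_pos.eq_iff (prod_pos fun i _ => hpos (b i))
      (mul_pos (pow_pos (hpos w) _) (pow_pos (hpos (w + 1)) r)),
    Real.log_pow_mul_pow (hpos w) (hpos (w + 1)), Real.log_prod fun i _ => (hpos (b i)).ne']
  exact hf.sum_eq_balanced_iff s b hr hsum

end StrictConvexSeq

namespace Multiset

theorem eq_replicate_succ_add_replicate_iff {s : Multiset ℕ} {m w r : ℕ} (hcard : card s = m)
    (hsum : s.sum = w * m + r) :
    s = replicate r (w + 1) + replicate (m - r) w ↔ ∀ x ∈ s, x = w ∨ x = w + 1 := by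
  classical
  subst hcard
  refine ⟨fun hs x hx => ?_, fun h => ?_⟩
  · rw [hs, mem_add, mem_replicate, mem_replicate] at hx
    omega
  set c := count (w + 1) s with hc_def
  have hc : c ≤ card s := count_le_card _ _
  have hrest : s.filter (¬ · = w + 1) = replicate (card s - c) w := by
    refine eq_replicate.2 ⟨?_, fun x hx => ?_⟩
    · have := congrArg card (filter_add_not (· = w + 1) s)
      rw [card_add, filter_eq', card_replicate, ← hc_def] at this
      omega
    · obtain ⟨hxs, hx⟩ := mem_filter.1 hx
      exact (h x hxs).resolve_right hx
  have hs : s = replicate c (w + 1) + replicate (card s - c) w := by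
    rw [← filter_eq', ← hrest, filter_add_not]
  have hcr : c = r := by
    have := congrArg sum hs
    rw [sum_add, sum_replicate, sum_replicate, smul_eq_mul, smul_eq_mul, hsum] at this
    obtain ⟨m, hm⟩ := Nat.exists_eq_add_of_le hc
    rw [hm, Nat.add_sub_cancel_left] at this
    linarith
  rwa [hcr] at hs

end Multiset

theorem strictConvexSeq_log_factorial_two_mul :
    StrictConvexSeq fun n => Real.log ((2 * n)! : ℝ) := by
  have hstep (n : ℕ) : Real.log ((2 * (n + 1))! : ℝ) - Real.log ((2 * n)! : ℝ) =
      Real.log (((2 * n + 2) * (2 * n + 1) : ℕ) : ℝ) := by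
    rw [show 2 * (n + 1) = 2 * n + 1 + 1 by ring, factorial_succ, factorial_succ, ← mul_assoc,
      Nat.cast_mul, Real.log_mul (by positivity) (by positivity)]
    ring
  intro m n hmn
  simp only [hstep]
  exact Real.log_lt_log (by positivity) (by exact_mod_cast Nat.mul_lt_mul'' (by omega) (by omega))

theorem multinomial_balanced_max_general (d k w r : ℕ) (hr : r < k) (hd : d = w * k + r)
    (b : Fin k → ℕ) (hsum : ∑ i, b i = d) :
    ((Nat.factorial (2 * d) : ℝ) / ∏ i, (Nat.factorial (2 * b i) : ℝ)) ≤
        (Nat.factorial (2 * d) : ℝ) /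
          ((Nat.factorial (2 * w) : ℝ) ^ (k - r) * (Nat.factorial (2 * (w + 1)) : ℝ) ^ r) ∧
      (((Nat.factorial (2 * d) : ℝ) / ∏ i, (Nat.factorial (2 * b i) : ℝ)) =
          (Nat.factorial (2 * d) : ℝ) /
            ((Nat.factorial (2 * w) : ℝ) ^ (k - r) * (Nat.factorial (2 * (w + 1)) : ℝ) ^ r) ↔
        (↑(List.ofFn b) : Multiset ℕ) =
          Multiset.replicate r (w + 1) + Multiset.replicate (k - r) w) := by
  have hcard : #(univ : Finset (Fin k)) = k := card_fin k
  have hf := strictConvexSeq_log_factorial_two_mul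
  have hpos (n : ℕ) : 0 < ((2 * n)! : ℝ) := by positivity
  have hr' : r ≤ #(univ : Finset (Fin k)) := hcard.symm ▸ hr.le
  have hsum' : ∑ i, b i = w * #(univ : Finset (Fin k)) + r := by rw [hcard, hsum, hd]
  have hle := hf.pow_mul_pow_le_prod hpos univ b hr' hsum'
  have heq := hf.prod_eq_pow_mul_pow_iff hpos univ b hr' hsum'
  rw [hcard] at hle heq
  have hX : 0 < ((2 * d)! : ℝ) := by positivity
  refine ⟨div_le_div_of_nonneg_left hX.le (by positivity) hle, ?_⟩
  rw [div_eq_mul_inv, div_eq_mul_inv, mul_right_inj' hX.ne', inv_inj, heq, ← Fin.univ_val_map,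
    Multiset.eq_replicate_succ_add_replicate_iff (by simp)
      (by rw [← sum_eq_multiset_sum, hsum, hd])]
  simp

/-- **Maximization of even multinomial coefficients over balanced partitions**
(inequality binom-estim). Let `k ≤ d` be positive integers and write `d = wk + r`
with `w ≥ 1` and `0 ≤ r < k`. Then for all positive integers `b₁,…,b_k` with
`∑ bᵢ = d`, the multinomial coefficient `(2d)!/((2b₁)!⋯(2b_k)!)` is at most
`M(k) = (2d)!/((2w)!^{k−r}·(2(w+1))!^{r})`, with equality iff the multiset
`{b₁,…,b_k}` consists of `r` copies of `w+1` and `k−r` copies of `w`. -/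
theorem multinomial_balanced_max (d k w r : ℕ) (hk : 0 < k) (hkd : k ≤ d)
    (hw : 1 ≤ w) (hr : r < k) (hd : d = w * k + r)
    (b : Fin k → ℕ) (hb : ∀ i, 0 < b i) (hsum : ∑ i, b i = d) :
    ((Nat.factorial (2 * d) : ℝ) / ∏ i, (Nat.factorial (2 * b i) : ℝ)) ≤
        (Nat.factorial (2 * d) : ℝ) /
          ((Nat.factorial (2 * w) : ℝ) ^ (k - r) * (Nat.factorial (2 * (w + 1)) : ℝ) ^ r) ∧
      (((Nat.factorial (2 * d) : ℝ) / ∏ i, (Nat.factorial (2 * b i) : ℝ)) =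
          (Nat.factorial (2 * d) : ℝ) /
            ((Nat.factorial (2 * w) : ℝ) ^ (k - r) * (Nat.factorial (2 * (w + 1)) : ℝ) ^ r) ↔
        (↑(List.ofFn b) : Multiset ℕ) =
          Multiset.replicate r (w + 1) + Multiset.replicate (k - r) w) :=
  multinomial_balanced_max_general d k w r hr hd b hsum
end
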